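/- (Non-unital tensor closure, Section 3.2.4) Let A be a (not necessarily unital) C*-algebra, P_0 ∈ A a projection, and u_{ij} ∈ A (1 ≤ i,j ≤ n) self-adjoint elements. Let p ∈ P(k,l) and q ∈ P(k',l') be partitions and suppose the non-unital relations R(p) and R(q) hold. Then the non-unital relations R(p⊗q) hold, where p⊗q ∈ P(k+k', l+l') is the tensor product of p and q. -/

import Mathlib

open scoped Classical

namespace PartitionCstar

/-- A partition in `P(k,l)`: an equivalence relation (whose classes are the blocks)
on the disjoint union of `k` upper points and `l` lower points. -/
abbrev Partition (k l : ℕ) := Setoid (Fin k ⊕ Fin l)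

/-- `labelsMatch p α β` holds iff, labelling the upper points by `α` and the lower points
by `β`, the strings (blocks) of `p` connect only equal indices. -/
def labelsMatch {n k l : ℕ} (p : Partition k l) (α : Fin k → Fin n) (β : Fin l → Fin n) :
    Prop :=
  ∀ x y : Fin k ⊕ Fin l, p.r x y → Sum.elim α β x = Sum.elim α β y

/-- The delta function `δ_p(α,β) ∈ {0,1}`. -/
noncomputable def delta {n k l : ℕ} (p : Partition k l) (α : Fin k → Fin n)
    (β : Fin l → Fin n) : ℕ :=
  if labelsMatch p α β then 1 else 0

/-- The relations `R(p)` for a matrix of elements `u` of a unital ring: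
`∑_γ δ_p(γ,β) u_{γ₁α₁}⋯u_{γₖαₖ} = ∑_{γ'} δ_p(α,γ') u_{β₁γ'₁}⋯u_{β_lγ'_l}`.
(For `k = 0` resp. `l = 0` the empty product is `1`, which yields the conventions
`δ_p(∅,β)·1` resp. `δ_p(α,∅)·1`.) -/
def SatisfiesRel {A : Type*} [Ring A] {n : ℕ} (u : Fin n → Fin n → A)
    {k l : ℕ} (p : Partition k l) : Prop :=
  ∀ (α : Fin k → Fin n) (β : Fin l → Fin n),
    (∑ γ : Fin k → Fin n,
      if labelsMatch p γ β then (List.ofFn fun s => u (γ s) (α s)).prod else 0)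
    = ∑ γ' : Fin l → Fin n,
      if labelsMatch p α γ' then (List.ofFn fun t => u (β t) (γ' t)).prod else 0

/-- The disjoint union of two set partitions. -/
def sumPartition {X Y : Type*} (p : Setoid X) (q : Setoid Y) : Setoid (X ⊕ Y) where
  r := Sum.LiftRel p.r q.r
  iseqv := by
    refine ⟨fun a => ?_, fun {a b} h => ?_, fun {a b c} h₁ h₂ => ?_⟩
    · cases a with
      | inl x => exact Sum.LiftRel.inl (p.iseqv.refl x)
      | inr y => exact Sum.LiftRel.inr (q.iseqv.refl y)
    · cases h with
      | inl h => exact Sum.LiftRel.inl (p.iseqv.symm h)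
      | inr h => exact Sum.LiftRel.inr (q.iseqv.symm h)
    · cases h₁ with
      | inl h₁ =>
        cases h₂ with
        | inl h₂ => exact Sum.LiftRel.inl (p.iseqv.trans h₁ h₂)
      | inr h₁ =>
        cases h₂ with
        | inr h₂ => exact Sum.LiftRel.inr (q.iseqv.trans h₁ h₂)

/-- Reindexing equivalence for the tensor product of partitions. -/
def tensorEquiv (k l k' l' : ℕ) :
    (Fin (k + k') ⊕ Fin (l + l')) ≃ ((Fin k ⊕ Fin l) ⊕ (Fin k' ⊕ Fin l')) :=
  (Equiv.sumCongr finSumFinEquiv.symm finSumFinEquiv.symm).trans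
    (Equiv.sumSumSumComm (Fin k) (Fin k') (Fin l) (Fin l'))

/-- The tensor product `p ⊗ q` of two partitions: horizontal concatenation,
blocks kept separate. -/
def tensor {k l k' l' : ℕ} (p : Partition k l) (q : Partition k' l') :
    Partition (k + k') (l + l') :=
  Setoid.comap (tensorEquiv k l k' l') (sumPartition p q)

/-- The join of `p ∈ P(k,l)` and `q ∈ P(l,m)` on the `k` upper, `l` middle and
`m` lower points, identifying the lower points of `p` with the upper points of `q`. -/
def compJoin {k l m : ℕ} (q : Partition l m) (p : Partition k l) :
    Setoid (Fin k ⊕ (Fin l ⊕ Fin m)) :=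
  (Setoid.comap (Equiv.sumAssoc (Fin k) (Fin l) (Fin m)).symm
      (sumPartition p (⊥ : Setoid (Fin m))))
    ⊔ sumPartition (⊥ : Setoid (Fin k)) q

/-- The composition `qp ∈ P(k,m)` of `q ∈ P(l,m)` below `p ∈ P(k,l)`: restriction
of the join to the upper and lower points. -/
def comp {k l m : ℕ} (q : Partition l m) (p : Partition k l) : Partition k m :=
  Setoid.comap (Sum.map id Sum.inr : Fin k ⊕ Fin m → Fin k ⊕ (Fin l ⊕ Fin m))
    (compJoin q p)

/-- Middle points in the composition procedure. -/
def IsMiddle {k l m : ℕ} : Fin k ⊕ (Fin l ⊕ Fin m) → Prop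
  | Sum.inr (Sum.inl _) => True
  | _ => False

/-- `rl q p`: the number of removed loops in the composition of `q` and `p`, i.e. the
number of blocks of the join consisting entirely of middle points. -/
noncomputable def rl {k l m : ℕ} (q : Partition l m) (p : Partition k l) : ℕ :=
  Nat.card {c : Quotient (compJoin q p) //
    ∀ x : Fin k ⊕ (Fin l ⊕ Fin m), Quotient.mk (compJoin q p) x = c → IsMiddle x}

/-- The involution `p* ∈ P(l,k)`: turning `p ∈ P(k,l)` upside down. -/
def involution {k l : ℕ} (p : Partition k l) : Partition l k :=
  Setoid.comap (Equiv.sumComm (Fin l) (Fin k)) p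

/-- The vertical reflection `p̃ ∈ P(k,l)`: reflecting `p` at the vertical axis. -/
def reflect {k l : ℕ} (p : Partition k l) : Partition k l :=
  Setoid.comap (Sum.map Fin.rev Fin.rev) p

/-- The setoid relating `x` and `y` (and nothing else besides equality). -/
def pairSetoid {X : Type*} (x y : X) : Setoid X where
  r a b := a = b ∨ (a = x ∧ b = y) ∨ (a = y ∧ b = x)
  iseqv := by
    refine ⟨fun a => Or.inl rfl, fun {a b} h => ?_, fun {a b c} h₁ h₂ => ?_⟩
    · rcases h with rfl | ⟨ha, hb⟩ | ⟨ha, hb⟩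
      · exact Or.inl rfl
      · exact Or.inr (Or.inr ⟨hb, ha⟩)
      · exact Or.inr (Or.inl ⟨hb, ha⟩)
    · rcases h₁ with rfl | h₁
      · exact h₂
      · rcases h₂ with rfl | h₂
        · exact Or.inr h₁
        · rcases h₁ with ⟨ha, hb⟩ | ⟨ha, hb⟩
          · rcases h₂ with ⟨hb', hc⟩ | ⟨hb', hc⟩
            · exact Or.inr (Or.inl ⟨ha, hc⟩)
            · exact Or.inl (ha.trans hc.symm)
          · rcases h₂ with ⟨hb', hc⟩ | ⟨hb', hc⟩
            · exact Or.inl (ha.trans hc.symm)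
            · exact Or.inr (Or.inr ⟨ha, hc⟩)

/-- Connecting (merging) the blocks of the points `x` and `y` of a partition. -/
def mergeBlocks {X : Type*} (p : Setoid X) (x y : X) : Setoid X :=
  p ⊔ pairSetoid x y

/-- Disconnecting the point `x` from its block and turning it into a singleton block. -/
def disconnect {X : Type*} (p : Setoid X) (x : X) : Setoid X where
  r a b := a = b ∨ (p.r a b ∧ a ≠ x ∧ b ≠ x)
  iseqv := by
    refine ⟨fun a => Or.inl rfl, fun {a b} h => ?_, fun {a b c} h₁ h₂ => ?_⟩
    · rcases h with rfl | ⟨h, ha, hb⟩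
      · exact Or.inl rfl
      · exact Or.inr ⟨p.iseqv.symm h, hb, ha⟩
    · rcases h₁ with rfl | ⟨h₁, ha, hb⟩
      · exact h₂
      · rcases h₂ with rfl | ⟨h₂, hb', hc⟩
        · exact Or.inr ⟨h₁, ha, hb⟩
        · exact Or.inr ⟨p.iseqv.trans h₁ h₂, ha, hc⟩

/-- The partition of the lower points induced by `p ∈ P(0,l)`. -/
def lowerSetoid {l : ℕ} (p : Partition 0 l) : Setoid (Fin l) :=
  Setoid.comap Sum.inr p

/-- The reindexing map for inserting `m` points after position `t` among `l` points. -/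
def insertMap (l m t : ℕ) (ht : t ≤ l) : Fin (l + m) → Fin l ⊕ Fin m := fun i =>
  if h1 : (i : ℕ) < t then Sum.inl ⟨i, lt_of_lt_of_le h1 ht⟩
  else if h2 : (i : ℕ) < t + m then Sum.inr ⟨(i : ℕ) - t, by omega⟩
  else Sum.inl ⟨(i : ℕ) - m, by have := i.isLt; omega⟩

/-- The partition in `P(0, l+m)` obtained from `p ∈ P(0,l)` by inserting `q ∈ P(0,m)`
after the `t`-th lower point of `p` (blocks of `p` and `q` kept separate). -/
def insertAt {l m : ℕ} (p : Partition 0 l) (q : Partition 0 m) (t : ℕ) (ht : t ≤ l) :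
    Partition 0 (l + m) :=
  Setoid.comap (Sum.elim (fun a : Fin 0 => a.elim0) (insertMap l m t ht))
    (sumPartition (lowerSetoid p) (lowerSetoid q))

/-- The reindexing map for the rotation moving the leftmost upper point to the
leftmost lower position. -/
def rotateMap (k l : ℕ) : Fin k ⊕ Fin (l + 1) → Fin (k + 1) ⊕ Fin l
  | Sum.inl a => Sum.inl a.succ
  | Sum.inr b => Fin.cases (Sum.inl (0 : Fin (k + 1))) (fun b' => Sum.inr b') b

/-- The rotated version of `p ∈ P(k+1, l)`: the leftmost upper point becomes the new
leftmost lower point (staying in its block). -/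
def rotate {k l : ℕ} (p : Partition (k + 1) l) : Partition k (l + 1) :=
  Setoid.comap (rotateMap k l) p

/-- The embedding of the remaining points after erasing the lower points `j` and `j+1`. -/
def eraseMap (k l j : ℕ) : Fin k ⊕ Fin l → Fin k ⊕ Fin (l + 2) :=
  Sum.map id fun b =>
    if (b : ℕ) < j then ⟨(b : ℕ), by have := b.isLt; omega⟩
    else ⟨(b : ℕ) + 2, by have := b.isLt; omega⟩

/-- The partition in `P(k,l)` obtained from `p ∈ P(k,l+2)` by connecting the blocks of
the `j`-th and `(j+1)`-th lower points and then erasing those two points. -/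
def erasePair {k l : ℕ} (p : Partition k (l + 2)) (j : Fin (l + 1)) : Partition k l :=
  Setoid.comap (eraseMap k l j)
    (mergeBlocks p (Sum.inr ⟨(j : ℕ), by have := j.isLt; omega⟩)
      (Sum.inr ⟨(j : ℕ) + 1, by have := j.isLt; omega⟩))

/-- The non-unital relations `R(p)` relative to a projection `P₀`:
`P₀·∑_γ δ_p(γ,β) u_{γ₁α₁}⋯u_{γₖαₖ} = (∑_{γ'} δ_p(α,γ') u_{β₁γ'₁}⋯u_{β_lγ'_l})·P₀`,
with the conventions `δ_p(∅,β)·P₀` resp. `δ_p(α,∅)·P₀` for `k = 0` resp. `l = 0`. -/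
def SatisfiesRelNU {A : Type*} [NonUnitalRing A] {n : ℕ} (P₀ : A)
    (u : Fin n → Fin n → A) {k l : ℕ} (p : Partition k l) : Prop :=
  ∀ (α : Fin k → Fin n) (β : Fin l → Fin n),
    (∑ γ : Fin k → Fin n,
      if labelsMatch p γ β then
        (List.ofFn fun s => u (γ s) (α s)).foldl (· * ·) P₀ else 0)
    = ∑ γ' : Fin l → Fin n,
      if labelsMatch p α γ' then
        (List.ofFn fun t => u (β t) (γ' t)).foldr (· * ·) P₀ else 0

/-!
Both sides of `R(p)` are values at `P₀` of additive operators on `A`: the left side multiplies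
`P₀` from the right by words in the `u i j`, the right side multiplies it from the left. For
`p ⊗ q` the left-side operator is that of `q` after that of `p`, and the right-side operator is
that of `p` after that of `q`. By associativity every right multiplication commutes with every
left multiplication, so `R(p)` and `R(q)` can be applied one after the other.
-/

section WordAction

variable {A : Type*} [NonUnitalSemiring A]

def mulRightList (L : List A) : AddMonoid.End A where
  toFun x := L.foldl (· * ·) x
  map_zero' := by induction L with
    | nil => rfl
    | cons a L ih => simp only [List.foldl_cons, zero_mul, ih]
  map_add' x y := by induction L generalizing x y with
    | nil => rfl
    | cons a L ih => simp only [List.foldl_cons, add_mul, ih]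

def mulLeftList (L : List A) : AddMonoid.End A where
  toFun x := L.foldr (· * ·) x
  map_zero' := by induction L with
    | nil => rfl
    | cons a L ih => simp only [List.foldr_cons, ih, mul_zero]
  map_add' x y := by induction L with
    | nil => rfl
    | cons a L ih => simp only [List.foldr_cons, ih, mul_add]

@[simp]
lemma mulRightList_apply (L : List A) (x : A) : mulRightList L x = L.foldl (· * ·) x := rfl

@[simp]
lemma mulLeftList_apply (L : List A) (x : A) : mulLeftList L x = L.foldr (· * ·) x := rfl

lemma mulRightList_append (L₁ L₂ : List A) :
    mulRightList (L₁ ++ L₂) = mulRightList L₂ * mulRightList L₁ :=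
  AddMonoidHom.ext fun _ => List.foldl_append

lemma mulLeftList_append (L₁ L₂ : List A) :
    mulLeftList (L₁ ++ L₂) = mulLeftList L₁ * mulLeftList L₂ :=
  AddMonoidHom.ext fun _ => List.foldr_append

lemma mulRightList_mul_left (L : List A) (a x : A) :
    mulRightList L (a * x) = a * mulRightList L x := by
  induction L generalizing x with
  | nil => rfl
  | cons b L ih => simpa only [mulRightList_apply, List.foldl_cons, mul_assoc] using ih (x * b)

lemma commute_mulRightList_mulLeftList (L M : List A) :
    Commute (mulRightList L) (mulLeftList M) := by
  refine AddMonoidHom.ext fun x => ?_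
  show mulRightList L (mulLeftList M x) = mulLeftList M (mulRightList L x)
  induction M with
  | nil => rfl
  | cons b M ih =>
    simp only [mulLeftList_apply, List.foldr_cons] at ih ⊢
    rw [mulRightList_mul_left, ih]

end WordAction

lemma sumPartition_le_ker_elim_iff {X Y ι : Type*} (p : Setoid X) (q : Setoid Y)
    (f : X → ι) (g : Y → ι) :
    sumPartition p q ≤ Setoid.ker (Sum.elim f g) ↔ p ≤ Setoid.ker f ∧ q ≤ Setoid.ker g := by
  simp only [Setoid.le_def, Setoid.ker_def]
  refine ⟨fun h => ⟨fun hxy => h (Sum.LiftRel.inl hxy), fun hxy => h (Sum.LiftRel.inr hxy)⟩,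
    fun ⟨hp, hq⟩ x y hxy => ?_⟩
  cases hxy with
  | inl h => exact hp h
  | inr h => exact hq h

lemma comap_le_ker_comp_iff {X Y ι : Type*} (e : X ≃ Y) (s : Setoid Y) (g : Y → ι) :
    Setoid.comap e s ≤ Setoid.ker (g ∘ e) ↔ s ≤ Setoid.ker g := by
  simp only [Setoid.le_def, Setoid.comap_rel, Setoid.ker_def, Function.comp_apply]
  exact ⟨fun h x y hxy => by simpa using @h (e.symm x) (e.symm y) (by simpa using hxy),
    fun h _ _ hxy => h hxy⟩

lemma labelsMatch_iff_le_ker {n k l : ℕ} (p : Partition k l) (α : Fin k → Fin n)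
    (β : Fin l → Fin n) : labelsMatch p α β ↔ p ≤ Setoid.ker (Sum.elim α β) :=
  ⟨fun h _ _ => h _ _, fun h _ _ => @h _ _⟩

lemma sumElim_append_eq_comp_tensorEquiv {n k l k' l' : ℕ} (α₁ : Fin k → Fin n)
    (α₂ : Fin k' → Fin n) (β₁ : Fin l → Fin n) (β₂ : Fin l' → Fin n) :
    Sum.elim (Fin.append α₁ α₂) (Fin.append β₁ β₂) =
      Sum.elim (Sum.elim α₁ β₁) (Sum.elim α₂ β₂) ∘ tensorEquiv k l k' l' := by
  ext (x | x) <;> refine Fin.addCases (fun i => ?_) (fun i => ?_) x <;>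
    simp [tensorEquiv]

lemma labelsMatch_tensor_append {n k l k' l' : ℕ} (p : Partition k l) (q : Partition k' l')
    (α₁ : Fin k → Fin n) (α₂ : Fin k' → Fin n) (β₁ : Fin l → Fin n) (β₂ : Fin l' → Fin n) :
    labelsMatch (tensor p q) (Fin.append α₁ α₂) (Fin.append β₁ β₂) ↔
      labelsMatch p α₁ β₁ ∧ labelsMatch q α₂ β₂ := by
  rw [labelsMatch_iff_le_ker, labelsMatch_iff_le_ker, labelsMatch_iff_le_ker,
    ← sumPartition_le_ker_elim_iff, sumElim_append_eq_comp_tensorEquiv, tensor,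
    comap_le_ker_comp_iff]

section RelationOperators

variable {A : Type*} [NonUnitalSemiring A] {n : ℕ} (u : Fin n → Fin n → A)

noncomputable def relLhs {k l : ℕ} (p : Partition k l) (α : Fin k → Fin n)
    (β : Fin l → Fin n) : AddMonoid.End A :=
  ∑ γ with labelsMatch p γ β, mulRightList (List.ofFn fun s => u (γ s) (α s))

noncomputable def relRhs {k l : ℕ} (p : Partition k l) (α : Fin k → Fin n)
    (β : Fin l → Fin n) : AddMonoid.End A :=
  ∑ γ' with labelsMatch p α γ', mulLeftList (List.ofFn fun t => u (β t) (γ' t))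

lemma relLhs_apply {k l : ℕ} (p : Partition k l) (α : Fin k → Fin n) (β : Fin l → Fin n)
    (x : A) :
    relLhs u p α β x =
      ∑ γ with labelsMatch p γ β, (List.ofFn fun s => u (γ s) (α s)).foldl (· * ·) x :=
  AddMonoidHom.finsetSum_apply _ _ _

lemma relRhs_apply {k l : ℕ} (p : Partition k l) (α : Fin k → Fin n) (β : Fin l → Fin n)
    (x : A) :
    relRhs u p α β x =
      ∑ γ' with labelsMatch p α γ', (List.ofFn fun t => u (β t) (γ' t)).foldr (· * ·) x :=
  AddMonoidHom.finsetSum_apply _ _ _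

lemma relLhs_tensor {k l k' l' : ℕ} (p : Partition k l) (q : Partition k' l')
    (α₁ : Fin k → Fin n) (α₂ : Fin k' → Fin n) (β₁ : Fin l → Fin n) (β₂ : Fin l' → Fin n) :
    relLhs u (tensor p q) (Fin.append α₁ α₂) (Fin.append β₁ β₂) =
      relLhs u q α₂ β₂ * relLhs u p α₁ β₁ := by
  rw [relLhs, relLhs, relLhs, Finset.sum_mul_sum, ← Finset.sum_product_right',
    ← Finset.filter_product, Finset.univ_product_univ]
  symm
  refine Finset.sum_equiv (Fin.appendEquiv k k') (fun ⟨γ₁, γ₂⟩ => ?_) (fun ⟨γ₁, γ₂⟩ _ => ?_)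
  · simp only [Finset.mem_filter, Finset.mem_univ, true_and]
    exact (labelsMatch_tensor_append p q γ₁ γ₂ β₁ β₂).symm
  · simp only [Fin.appendEquiv_apply, List.ofFn_add, Fin.append_left', Fin.append_right,
      mulRightList_append]

lemma relRhs_tensor {k l k' l' : ℕ} (p : Partition k l) (q : Partition k' l')
    (α₁ : Fin k → Fin n) (α₂ : Fin k' → Fin n) (β₁ : Fin l → Fin n) (β₂ : Fin l' → Fin n) :
    relRhs u (tensor p q) (Fin.append α₁ α₂) (Fin.append β₁ β₂) =
      relRhs u p α₁ β₁ * relRhs u q α₂ β₂ := by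
  rw [relRhs, relRhs, relRhs, Finset.sum_mul_sum, ← Finset.sum_product',
    ← Finset.filter_product, Finset.univ_product_univ]
  symm
  refine Finset.sum_equiv (Fin.appendEquiv l l') (fun ⟨γ₁, γ₂⟩ => ?_) (fun ⟨γ₁, γ₂⟩ _ => ?_)
  · simp only [Finset.mem_filter, Finset.mem_univ, true_and]
    exact (labelsMatch_tensor_append p q α₁ α₂ γ₁ γ₂).symm
  · simp only [Fin.appendEquiv_apply, List.ofFn_add, Fin.append_left', Fin.append_right,
      mulLeftList_append]

lemma commute_relLhs_relRhs {k l k' l' : ℕ} (p : Partition k l) (q : Partition k' l')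
    (α : Fin k → Fin n) (β : Fin l → Fin n) (α' : Fin k' → Fin n) (β' : Fin l' → Fin n) :
    Commute (relLhs u p α β) (relRhs u q α' β') :=
  Commute.sum_left _ _ _ fun _ _ =>
    Commute.sum_right _ _ _ fun _ _ => commute_mulRightList_mulLeftList _ _

end RelationOperators

lemma satisfiesRelNU_iff {A : Type*} [NonUnitalRing A] {n : ℕ} (P₀ : A)
    (u : Fin n → Fin n → A) {k l : ℕ} (p : Partition k l) :
    SatisfiesRelNU P₀ u p ↔ ∀ α β, relLhs u p α β P₀ = relRhs u p α β P₀ := by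
  simp only [SatisfiesRelNU, relLhs_apply, relRhs_apply, Finset.sum_filter]

theorem satisfiesRelNU_tensor_general {A : Type*} [NonUnitalCStarAlgebra A] {n : ℕ}
    (P₀ : A) (u : Fin n → Fin n → A)
    {k l k' l' : ℕ} (p : Partition k l) (q : Partition k' l')
    (hp : SatisfiesRelNU P₀ u p) (hq : SatisfiesRelNU P₀ u q) :
    SatisfiesRelNU P₀ u (tensor p q) := by
  rw [satisfiesRelNU_iff] at hp hq ⊢
  intro α β
  obtain ⟨α₁, α₂, rfl⟩ : ∃ α₁ α₂, α = Fin.append α₁ α₂ :=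
    ⟨_, _, Fin.append_castAdd_natAdd.symm⟩
  obtain ⟨β₁, β₂, rfl⟩ : ∃ β₁ β₂, β = Fin.append β₁ β₂ :=
    ⟨_, _, Fin.append_castAdd_natAdd.symm⟩
  calc relLhs u (tensor p q) (Fin.append α₁ α₂) (Fin.append β₁ β₂) P₀
      = relLhs u q α₂ β₂ (relLhs u p α₁ β₁ P₀) := by rw [relLhs_tensor]; rfl
    _ = relLhs u q α₂ β₂ (relRhs u p α₁ β₁ P₀) := by rw [hp]
    _ = relRhs u p α₁ β₁ (relLhs u q α₂ β₂ P₀) :=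
      congrArg (· P₀) (commute_relLhs_relRhs u q p α₂ β₂ α₁ β₁).eq
    _ = relRhs u p α₁ β₁ (relRhs u q α₂ β₂ P₀) := by rw [hq]
    _ = relRhs u (tensor p q) (Fin.append α₁ α₂) (Fin.append β₁ β₂) P₀ := by
      rw [relRhs_tensor]; rfl

/-- Section 3.2.4 (non-unital tensor closure): if the non-unital relations `R(p)` and
`R(q)` hold relative to a projection `P₀`, then the non-unital relations `R(p⊗q)` hold
as well. -/
theorem satisfiesRelNU_tensor {A : Type*} [NonUnitalCStarAlgebra A] {n : ℕ}
    (P₀ : A) (hP₀sa : IsSelfAdjoint P₀) (hP₀idem : P₀ * P₀ = P₀)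
    (u : Fin n → Fin n → A) (hsa : ∀ i j, IsSelfAdjoint (u i j))
    {k l k' l' : ℕ} (p : Partition k l) (q : Partition k' l')
    (hp : SatisfiesRelNU P₀ u p) (hq : SatisfiesRelNU P₀ u q) :
    SatisfiesRelNU P₀ u (tensor p q) :=
  satisfiesRelNU_tensor_general P₀ u p q hp hq

end PartitionCstar
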